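/- arXiv:2412.03482 — 4 statements merged into one kernel-verified Lean document; each statement's English description precedes it below -/
import Mathlib

section
/- Let D be a digraph and let (R_i)_{i∈I} be a countable family of pairwise disjoint out-rays in D such that any two of them are equivalent (i.e., for any two rays in the family there are infinitely many pairwise disjoint directed paths from each to the other). Then there exists a single out-ray S in D that intersects every ray R_i in infinitely many vertices. -/
variable {V : Type*}

/-- An out-ray: a one-way infinite directed path oriented away from its start. -/
def IsOutRay (D : Digraph V) (f : ℕ → V) : Prop :=
  Function.Injective f ∧ ∀ n, D.Adj (f n) (f (n + 1))

/-- An in-ray: a one-way infinite directed path oriented towards its start. -/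
def IsInRay (D : Digraph V) (f : ℕ → V) : Prop :=
  Function.Injective f ∧ ∀ n, D.Adj (f (n + 1)) (f n)

/-- A finite directed path, given as a nonempty duplicate-free list of vertices. -/
def IsDipath (D : Digraph V) (p : List V) : Prop :=
  p ≠ [] ∧ p.Nodup ∧ p.Chain' D.Adj

def StartsIn (p : List V) (A : Set V) : Prop := ∃ a ∈ A, p.head? = some a

def EndsIn (p : List V) (B : Set V) : Prop := ∃ b ∈ B, p.getLast? = some b

def ListsDisjoint (p q : List V) : Prop := ∀ v ∈ p, v ∉ q

/-- There are infinitely many pairwise disjoint directed A–B paths. -/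
def ManyDisjointPaths (D : Digraph V) (A B : Set V) : Prop :=
  ∃ P : ℕ → List V,
    (∀ n, IsDipath D (P n) ∧ StartsIn (P n) A ∧ EndsIn (P n) B) ∧
    ∀ m n, m ≠ n → ListsDisjoint (P m) (P n)

/-- Two rays are equivalent: infinitely many disjoint paths in both directions. -/
def EquivRays (D : Digraph V) (R₁ R₂ : ℕ → V) : Prop :=
  ManyDisjointPaths D (Set.range R₁) (Set.range R₂) ∧
  ManyDisjointPaths D (Set.range R₂) (Set.range R₁)

/-!
Enumerate `I` as `σ : ℕ → I` so that every index occurs infinitely often, and build dipaths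
`P₀ ⊑ P₁ ⊑ ⋯`, each a proper prefix of the next, where `Pₖ` ends on the ray `R (σ k)` at a
vertex beyond which it does not meet that ray. To pass from a path ending at `R i c` to the ray
`R j`, take one of the infinitely many disjoint `R i`–`R j` paths that avoids the finite set
consisting of the current path, `R i 0, …, R i c` and the vertices of `R j` already used; cut it
down to a subpath from its last vertex on `R i` to the first following vertex on `R j`, and reach
its start by walking along `R i`. The union of the `Pₖ` is an out-ray meeting every `R i`
infinitely often.
-/

theorem List.exists_cons_suffix_of_exists_mem {α : Type*} {l : List α} {A : Set α}
    (h : ∃ a ∈ l, a ∈ A) :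
    ∃ a t, a ∈ A ∧ (∀ v ∈ t, v ∉ A) ∧ a :: t <:+ l := by
  induction l with
  | nil => simp at h
  | cons z l ih =>
    by_cases hl : ∃ a ∈ l, a ∈ A
    · obtain ⟨a, t, ha, ht, hsuf⟩ := ih hl
      exact ⟨a, t, ha, ht, hsuf.trans (suffix_cons z l)⟩
    · push Not at hl
      obtain ⟨a, ha, haA⟩ := h
      obtain rfl | ha := mem_cons.1 ha
      · exact ⟨a, l, haA, hl, suffix_refl _⟩
      · exact absurd haA (hl a ha)

/-- Cut `p` at its first vertex in `B`, then at the last vertex in `A` before it. -/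
theorem List.exists_cons_append_singleton_infix {α : Type*} {p : List α} {A B : Set α} {a b : α}
    (ha : p.head? = some a) (haA : a ∈ A) (haB : a ∉ B) (hb : b ∈ p) (hbB : b ∈ B) :
    ∃ x r y, x ∈ A ∧ y ∈ B ∧ (∀ v ∈ r, v ∉ A ∧ v ∉ B) ∧ x :: (r ++ [y]) <:+: p := by
  classical
  obtain ⟨y, hy⟩ : ∃ y, p.find? (· ∈ B) = some y :=
    Option.isSome_iff_exists.1 (find?_isSome.2 ⟨b, hb, by simpa using hbB⟩)
  obtain ⟨hyB, u, w, rfl, hu⟩ := find?_eq_some_iff_append.1 hy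
  simp only [decide_eq_true_eq, Bool.not_eq_true', decide_eq_false_iff_not] at hyB hu
  have hau : a ∈ u := by
    cases u with
    | nil => exact absurd (Option.some_injective _ ha ▸ hyB) haB
    | cons z u => exact Option.some_injective _ ha ▸ mem_cons_self
  obtain ⟨x, r, hxA, hrA, s, rfl⟩ := exists_cons_suffix_of_exists_mem ⟨a, hau, haA⟩
  refine ⟨x, r, y, hxA, hyB, fun v hv => ⟨hrA v hv, hu v (by simp [hv])⟩, s, w, by simp⟩

theorem List.getLast?_append_of_getLast?_eq {α : Type*} {l q : List α} {x : α}
    (h : l.getLast? = some x) : (l ++ q).getLast? = (x :: q).getLast? := by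
  simp [List.getLast?_append, List.getLast?_cons, h]

theorem List.getLast?_cons_map_range' {α : Type*} (f : ℕ → α) (c n : ℕ) :
    (f c :: (List.range' (c + 1) n).map f).getLast? = some (f (c + n)) := by
  rw [← List.map_cons, ← List.range'_succ]
  simp [List.getLast?_range']

section Dipaths

variable {D : Digraph V}

theorem IsDipath.of_infix {p q : List V} (hp : IsDipath D p) (hq : q <:+: p) (hne : q ≠ []) :
    IsDipath D q :=
  ⟨hne, hp.2.1.sublist hq.sublist, hp.2.2.infix hq⟩

theorem IsDipath.append {l q : List V} {x : V} (hl : IsDipath D l) (hq : IsDipath D (x :: q))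
    (hlast : l.getLast? = some x) (hdisj : ∀ v ∈ q, v ∉ l) : IsDipath D (l ++ q) := by
  refine ⟨by simp [hl.1], List.nodup_append.2 ⟨hl.2.1, (List.nodup_cons.1 hq.2.1).2,
    fun a ha b hb hab => hdisj b hb (hab ▸ ha)⟩, List.isChain_append.2 ⟨hl.2.2, hq.2.2.tail, ?_⟩⟩
  rintro a ha b hb
  obtain rfl : a = x := by simpa [hlast] using ha.symm
  exact hq.2.2.rel_head? hb

theorem IsOutRay.isDipath_cons_map_range' {f : ℕ → V} (hf : IsOutRay D f) (c n : ℕ) :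
    IsDipath D (f c :: (List.range' (c + 1) n).map f) := by
  rw [← List.map_cons, ← List.range'_succ]
  refine ⟨by simp, (List.nodup_range' _).map hf.1, (List.isChain_map f).2 ?_⟩
  exact (List.isChain_range' c _ 1).imp fun a b (hab : b = a + 1) => hab ▸ hf.2 a

end Dipaths

theorem ManyDisjointPaths.exists_avoiding {D : Digraph V} {A B : Set V}
    (h : ManyDisjointPaths D A B) {F : Set V} (hF : F.Finite) :
    ∃ p, IsDipath D p ∧ StartsIn p A ∧ EndsIn p B ∧ ∀ v ∈ p, v ∉ F := by
  obtain ⟨P, hP, hdisj⟩ := h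
  by_contra! hmeet
  choose f hfP hfF using fun n => hmeet (P n) (hP n).1 (hP n).2.1 (hP n).2.2
  have hf : Function.Injective f := fun m n hmn => by
    by_contra hne
    exact hdisj m n hne (f m) (hfP m) (hmn ▸ hfP n)
  exact Set.infinite_range_of_injective hf (hF.subset (Set.range_subset_iff.2 hfF))

theorem Function.Injective.exists_bound_of_mem {α : Type*} {g : ℕ → α}
    (hg : Function.Injective g) (l : List α) : ∃ M, ∀ m, g m ∈ l → m ≤ M :=
  (l.finite_toSet.preimage hg.injOn).bddAbove

/-- `le_index_of_mem` is what lets the path be continued along `R ray` without repeating a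
vertex. -/
structure RayPath {I : Type*} (D : Digraph V) (R : I → ℕ → V) where
  path : List V
  ray : I
  index : ℕ
  isDipath : IsDipath D path
  getLast?_eq : path.getLast? = some (R ray index)
  le_index_of_mem : ∀ m, R ray m ∈ path → m ≤ index

namespace RayPath

variable {I : Type*} {D : Digraph V} {R : I → ℕ → V}

def advance (s : RayPath D R) (hR : IsOutRay D (R s.ray)) (n : ℕ) : RayPath D R where
  path := s.path ++ (List.range' (s.index + 1) n).map (R s.ray)
  ray := s.ray
  index := s.index + n
  isDipath := s.isDipath.append (hR.isDipath_cons_map_range' _ _) s.getLast?_eq <| by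
    simp only [List.mem_map, List.mem_range']
    rintro _ ⟨m, ⟨k, hk, rfl⟩, rfl⟩ hmem
    have := s.le_index_of_mem _ hmem
    omega
  getLast?_eq := by
    rw [List.getLast?_append_of_getLast?_eq s.getLast?_eq, List.getLast?_cons_map_range']
  le_index_of_mem m hm := by
    rcases List.mem_append.1 hm with hm | hm
    · exact (s.le_index_of_mem m hm).trans (Nat.le_add_right _ _)
    · obtain ⟨m', hm', hm'm⟩ := List.mem_map.1 hm
      rw [hR.1 hm'm] at hm'
      simp only [List.mem_range'] at hm'
      omega

theorem exists_extend_to_ray (hray : ∀ i, IsOutRay D (R i))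
    (hdisj : ∀ i j, i ≠ j → ∀ n m, R i n ≠ R j m) (s : RayPath D R) {k : I} (hk : k ≠ s.ray)
    (hpaths : ManyDisjointPaths D (Set.range (R s.ray)) (Set.range (R k))) :
    ∃ t : RayPath D R, t.ray = k ∧ s.path <+: t.path ∧ s.path.length < t.path.length := by
  obtain ⟨M, hM⟩ := (hray k).1.exists_bound_of_mem s.path
  obtain ⟨p, hp, ⟨a, haA, ha⟩, ⟨b, hbB, hb⟩, hpF⟩ := hpaths.exists_avoiding
    (((s.path.finite_toSet.union ((Set.finite_Iic s.index).image (R s.ray)))).union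
      ((Set.finite_Iic M).image (R k)))
  have hA : ∀ v ∈ Set.range (R s.ray), v ∉ Set.range (R k) := by
    rintro _ ⟨n, rfl⟩ ⟨m, hm⟩
    exact hdisj k s.ray hk m n hm
  obtain ⟨_, r, _, ⟨x, rfl⟩, ⟨y, rfl⟩, hr, hinfix⟩ :=
    List.exists_cons_append_singleton_infix ha haA (hA a haA) (List.mem_of_getLast? hb) hbB
  have hq := hp.of_infix hinfix (List.cons_ne_nil _ _)
  have hqp := hinfix.subset
  have hqF : ∀ v ∈ r ++ [R k y], v ∉ s.path ∧ v ∉ Set.range (R s.ray) := by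
    intro v hv
    refine ⟨fun h => hpF v (hqp (List.mem_cons_of_mem _ hv)) (Or.inl (Or.inl h)), ?_⟩
    rcases List.mem_append.1 hv with hv | hv
    · exact (hr v hv).1
    · obtain rfl := List.mem_singleton.1 hv
      exact fun h => hA _ h ⟨y, rfl⟩
  have hx : s.index < x := by
    by_contra! h
    exact hpF _ (hqp List.mem_cons_self) (Or.inl (Or.inr ⟨x, h, rfl⟩))
  have hy : M < y := by
    by_contra! h
    exact hpF _ (hqp (by simp)) (Or.inr ⟨y, h, rfl⟩)
  set s' := s.advance (hray s.ray) (x - s.index)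
  have hs'last : s'.path.getLast? = some (R s.ray x) := by
    rw [s'.getLast?_eq]
    change some (R s.ray (s.index + (x - s.index))) = _
    rw [Nat.add_sub_cancel' hx.le]
  refine ⟨⟨s'.path ++ (r ++ [R k y]), k, y, s'.isDipath.append hq hs'last ?_, ?_, ?_⟩, rfl, ?_, ?_⟩
  · intro v hv hvs'
    rcases List.mem_append.1 hvs' with h | h
    · exact (hqF v hv).1 h
    · obtain ⟨m, -, rfl⟩ := List.mem_map.1 h
      exact (hqF _ hv).2 ⟨m, rfl⟩
  · simp [List.getLast?_append]
  · intro m hm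
    rcases List.mem_append.1 hm with hm | hm
    · rcases List.mem_append.1 hm with hm | hm
      · exact (hM m hm).trans hy.le
      · obtain ⟨m', -, hm'⟩ := List.mem_map.1 hm
        exact absurd hm'.symm (hdisj k s.ray hk m m')
    · rcases List.mem_append.1 hm with hm | hm
      · exact absurd ⟨m, rfl⟩ (hr _ hm).2
      · exact ((hray k).1 (List.mem_singleton.1 hm)).le
  · exact (List.prefix_append _ _).trans (List.prefix_append _ _)
  · simp [s', advance]

theorem exists_extend (hray : ∀ i, IsOutRay D (R i))
    (hdisj : ∀ i j, i ≠ j → ∀ n m, R i n ≠ R j m)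
    (hequiv : ∀ i j, i ≠ j → EquivRays D (R i) (R j)) (s : RayPath D R) (k : I) :
    ∃ t : RayPath D R, t.ray = k ∧ s.path <+: t.path ∧ s.path.length < t.path.length := by
  by_cases hk : k = s.ray
  · subst hk
    exact ⟨s.advance (hray _) 1, rfl, List.prefix_append _ _, by simp [advance]⟩
  · exact s.exists_extend_to_ray hray hdisj hk (hequiv s.ray k (Ne.symm hk)).1

theorem exists_seq (hray : ∀ i, IsOutRay D (R i))
    (hdisj : ∀ i j, i ≠ j → ∀ n m, R i n ≠ R j m)
    (hequiv : ∀ i j, i ≠ j → EquivRays D (R i) (R j)) (σ : ℕ → I) :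
    ∃ st : ℕ → RayPath D R, ∀ k, (st k).ray = σ k ∧ (st k).path <+: (st (k + 1)).path ∧
      (st k).path.length < (st (k + 1)).path.length := by
  choose next hray_next hprefix hlength using exists_extend hray hdisj hequiv
  let s₀ : RayPath D R := ⟨[R (σ 0) 0], σ 0, 0, ⟨by simp, List.nodup_singleton _,
    List.isChain_singleton _⟩, rfl, fun m hm => ((hray _).1 (List.mem_singleton.1 hm)).le⟩
  let st : ℕ → RayPath D R := fun k => Nat.rec s₀ (fun k s => next s (σ (k + 1))) k
  refine ⟨st, fun k => ⟨?_, hprefix _ _, hlength _ _⟩⟩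
  cases k with
  | zero => rfl
  | succ k => exact hray_next _ _

end RayPath

theorem exists_nat_enumeration_infinite_fibers (I : Type*) [Countable I] [Nonempty I] :
    ∃ σ : ℕ → I, ∀ i, {k | σ k = i}.Infinite := by
  obtain ⟨e, he⟩ := exists_surjective_nat I
  refine ⟨fun k => e k.unpair.1, fun i => ?_⟩
  obtain ⟨m, rfl⟩ := he i
  exact Set.infinite_of_injective_forall_mem (f := Nat.pair m)
    (fun a b hab => (Nat.pair_eq_pair.1 hab).2) (by simp)

section Limits

variable {α : Type*} {L : ℕ → List α}

theorem List.exists_getElem_eq_of_prefix (hpre : ∀ k, L k <+: L (k + 1))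
    (hlt : ∀ k, k < (L k).length) :
    ∃ S : ℕ → α, ∀ k n (h : n < (L k).length), (L k)[n] = S n := by
  have hmono : ∀ k l, k ≤ l → L k <+: L l := fun k l hkl => by
    induction l, hkl using Nat.le_induction with
    | base => exact List.prefix_refl _
    | succ l _ ih => exact ih.trans (hpre l)
  refine ⟨fun n => (L n)[n]'(hlt n), fun k n h => ?_⟩
  exact ((hmono k _ (le_max_left k n)).getElem h).trans
    ((hmono n _ (le_max_right k n)).getElem (hlt n)).symm

theorem infinite_setOf_mem_of_getLast? {S : ℕ → α} (hlen : StrictMono fun k => (L k).length)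
    (hS : ∀ k n (h : n < (L k).length), (L k)[n] = S n) {X : Set α}
    (hX : {k | ∃ x ∈ X, (L k).getLast? = some x}.Infinite) : {n | S n ∈ X}.Infinite := by
  refine Set.infinite_of_injOn_mapsTo (f := fun k => (L k).length - 1) ?_ ?_ hX
  · rintro k ⟨x, -, hk⟩ l ⟨y, -, hl⟩ hkl
    have := List.length_pos_of_mem (List.mem_of_getLast? hk)
    have := List.length_pos_of_mem (List.mem_of_getLast? hl)
    exact hlen.injective (by simp only at hkl ⊢; omega)
  · rintro k ⟨x, hx, hk⟩
    have hpos := List.length_pos_of_mem (List.mem_of_getLast? hk)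
    rw [List.getLast?_eq_getElem?, List.getElem?_eq_getElem (by omega), Option.some_inj] at hk
    change S ((L k).length - 1) ∈ X
    rwa [← hS k _ (by omega), hk]

end Limits

theorem isOutRay_of_getElem_eq {D : Digraph V} {L : ℕ → List V} {S : ℕ → V}
    (hL : ∀ k, IsDipath D (L k)) (hlt : ∀ k, k < (L k).length)
    (hS : ∀ k n (h : n < (L k).length), (L k)[n] = S n) : IsOutRay D S := by
  refine ⟨fun n m hnm => ?_, fun n => ?_⟩
  · have hn : n < (L (max n m)).length := (le_max_left n m).trans_lt (hlt _)
    have hm : m < (L (max n m)).length := (le_max_right n m).trans_lt (hlt _)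
    rwa [← hS _ n hn, ← hS _ m hm, (hL _).2.1.getElem_inj_iff] at hnm
  · rw [← hS (n + 1) n (by have := hlt (n + 1); omega), ← hS (n + 1) (n + 1) (hlt _)]
    exact List.isChain_iff_getElem.1 (hL (n + 1)).2.2 n (by have := hlt (n + 1); omega)

/-- Proposition 2.1: for a countable family of disjoint equivalent out-rays there is an
out-ray meeting every member of the family infinitely often. -/
theorem stmt0 {I : Type*} [Countable I] [Nonempty I] (D : Digraph V) (R : I → ℕ → V)
    (hray : ∀ i, IsOutRay D (R i))
    (hdisj : ∀ i j, i ≠ j → ∀ n m, R i n ≠ R j m)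
    (hequiv : ∀ i j, i ≠ j → EquivRays D (R i) (R j)) :
    ∃ S : ℕ → V, IsOutRay D S ∧ ∀ i, {n : ℕ | S n ∈ Set.range (R i)}.Infinite := by
  obtain ⟨σ, hσ⟩ := exists_nat_enumeration_infinite_fibers I
  obtain ⟨st, hst⟩ := RayPath.exists_seq hray hdisj hequiv σ
  have hlen : StrictMono fun k => (st k).path.length :=
    strictMono_nat_of_lt_succ fun k => (hst k).2.2
  have hlt : ∀ k, k < (st k).path.length := fun k =>
    calc k < k + (st 0).path.length :=
          Nat.lt_add_of_pos_right (List.length_pos_iff.2 (st 0).isDipath.1)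
      _ ≤ (st k).path.length := hlen.add_le_nat k 0
  obtain ⟨S, hS⟩ := List.exists_getElem_eq_of_prefix (fun k => (hst k).2.1) hlt
  refine ⟨S, isOutRay_of_getElem_eq (fun k => (st k).isDipath) hlt hS,
    fun i => infinite_setOf_mem_of_getLast? hlen hS ((hσ i).mono ?_)⟩
  rintro k rfl
  exact ⟨_, ⟨_, rfl⟩, (hst k).1 ▸ (st k).getLast?_eq⟩
end

section
/- Let D be an infinite digraph all of whose strong components are finite, and suppose that for all but finitely many strong components C of D there exists an edge with tail in C and head outside C. Then D contains an in-ray, or an out-ray, or a vertex of infinite in-degree. -/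
variable {V : Type*}

/-- Two vertices lie in the same strong component. -/
def StrongEquiv (D : Digraph V) (u v : V) : Prop :=
  Relation.ReflTransGen D.Adj u v ∧ Relation.ReflTransGen D.Adj v u

/-!
Suppose there is no in-ray and every in-degree is finite. If infinitely many vertices reached
some vertex `v`, then, the strong component of `v` being finite, infinitely many of them would
reach `v` through one of the finitely many edges entering that component from outside;
iterating gives an infinite backward sequence of strong components, hence an in-ray (an out-ray
of the reversed digraph). So every vertex is reached from only finitely many vertices, and some
`x₀` reaches none of the finitely many vertices whose strong component has no outgoing edge.
From `x₀`, walk towards an outgoing edge of the current strong component and leave through it: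
strong components are never revisited and the distance to the exit drops inside each one, so
the walk is an out-ray.
-/

open Relation

section Relation

variable {R : V → V → Prop}

def stepsTo (R : V → V → Prop) (E : Set V) : ℕ → Set V
  | 0 => E
  | n + 1 => {x | ∃ y ∈ stepsTo R E n, R x y}

theorem exists_mem_stepsTo_of_reflTransGen {E : Set V} {x u : V} (h : ReflTransGen R x u)
    (hu : u ∈ E) : ∃ n, x ∈ stepsTo R E n := by
  induction h using ReflTransGen.head_induction_on with
  | refl => exact ⟨0, hu⟩
  | head hxy _ ih =>
    obtain ⟨n, hn⟩ := ih
    exact ⟨n + 1, _, hn, hxy⟩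

theorem exists_measure_decreasing_toward (R : V → V → Prop) (E : Set V) :
    ∃ μ : V → ℕ, ∀ x u, ReflTransGen R x u → u ∈ E → x ∉ E → ∃ y, R x y ∧ μ y < μ x := by
  let μ x := sInf {n | x ∈ stepsTo R E n}
  refine ⟨μ, fun x u hxu hu hx => ?_⟩
  have hmem : x ∈ stepsTo R E (μ x) :=
    Nat.sInf_mem (s := {n | x ∈ stepsTo R E n}) (exists_mem_stepsTo_of_reflTransGen hxu hu)
  obtain ⟨m, hm⟩ : ∃ m, μ x = m + 1 :=
    Nat.exists_eq_succ_of_ne_zero fun h0 => hx (by rwa [h0] at hmem)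
  rw [hm] at hmem
  obtain ⟨y, hy, hxy⟩ := hmem
  exact ⟨y, hxy, hm ▸ Nat.lt_succ_of_le (Nat.sInf_le hy)⟩

theorem exists_rel_of_reflTransGen_of_not {P : V → Prop} {x y : V} (h : ReflTransGen R x y)
    (hx : ¬ P x) (hy : P y) : ∃ u c, ReflTransGen R x u ∧ ¬ P u ∧ P c ∧ R u c := by
  induction h using ReflTransGen.head_induction_on with
  | refl => exact absurd hy hx
  | @head a c hac _ ih =>
    by_cases hc : P c
    · exact ⟨a, c, .refl, hx, hc, hac⟩
    · obtain ⟨u, c', hcu, hu, hc', huc'⟩ := ih hc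
      exact ⟨u, c', .head hac hcu, hu, hc', huc'⟩

/-- `R a b ∧ ReflTransGen R b a` says that the edge `ab` lies inside a strong component. -/
theorem reflTransGen_within_of_reflTransGen {x u : V} (h : ReflTransGen R x u)
    (hux : ReflTransGen R u x) : ReflTransGen (fun a b => R a b ∧ ReflTransGen R b a) x u := by
  induction h using ReflTransGen.head_induction_on with
  | refl => exact .refl
  | @head a c hac hcu ih =>
    exact .head ⟨hac, hcu.trans hux⟩ (ih (hux.tail hac))

theorem reflTransGen_of_le_of_rel_succ {f : ℕ → V} (hf : ∀ n, R (f n) (f (n + 1))) {m n : ℕ}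
    (hmn : m ≤ n) : ReflTransGen R (f m) (f n) := by
  induction n, hmn using Nat.le_induction with
  | base => exact .refl
  | succ n _ ih => exact ih.tail (hf n)

/-- A repeated vertex would keep the walk inside one strong component in between, where `μ`
only decreases. -/
theorem injective_of_rel_succ_of_measure_lt {μ : V → ℕ} {f : ℕ → V}
    (hf : ∀ n, R (f n) (f (n + 1)))
    (hμ : ∀ n, ReflTransGen R (f (n + 1)) (f n) → μ (f (n + 1)) < μ (f n)) :
    Function.Injective f := by
  suffices ∀ i j, i < j → f i ≠ f j by
    intro i j hij
    rcases lt_trichotomy i j with h | rfl | h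
    exacts [(this i j h hij).elim, rfl, (this j i h hij.symm).elim]
  intro i j hij heq
  have hback : ∀ k, i ≤ k → k < j → ReflTransGen R (f (k + 1)) (f k) := fun k hik hkj =>
    (reflTransGen_of_le_of_rel_succ hf hkj).trans (heq ▸ reflTransGen_of_le_of_rel_succ hf hik)
  have hdec : ∀ k, i < k → k ≤ j → μ (f k) < μ (f i) := by
    intro k hik hkj
    induction k, hik using Nat.le_induction with
    | base => exact hμ i (hback i le_rfl hkj)
    | succ k hik ih => exact (hμ k (hback k (by omega) hkj)).trans (ih (by omega))
  exact (hdec j hij le_rfl).ne (congrArg μ heq.symm)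

end Relation

def Digraph.reverse (D : Digraph V) : Digraph V where
  Adj a b := D.Adj b a

theorem strongEquiv_reverse {D : Digraph V} {u v : V} :
    StrongEquiv D.reverse u v ↔ StrongEquiv D u v :=
  ⟨fun h => ⟨reflTransGen_swap.mp h.2, reflTransGen_swap.mp h.1⟩,
    fun h => ⟨reflTransGen_swap.mpr h.2, reflTransGen_swap.mpr h.1⟩⟩

section OutRay

variable (D : Digraph V) {S : Set V}

theorem exists_step_of_forall_exists_exit
    (hS : ∀ x y, x ∈ S → StrongEquiv D x y → y ∈ S)
    (hexit : ∀ x ∈ S, ∃ u w, StrongEquiv D u x ∧ ¬ StrongEquiv D w x ∧ D.Adj u w ∧ w ∈ S) :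
    ∃ μ : V → ℕ, ∀ x ∈ S, ∃ y ∈ S, D.Adj x y ∧ (ReflTransGen D.Adj y x → μ y < μ x) := by
  let E := {u | ∃ w ∈ S, D.Adj u w ∧ ¬ ReflTransGen D.Adj w u}
  obtain ⟨μ, hμ⟩ :=
    exists_measure_decreasing_toward (fun a b => D.Adj a b ∧ ReflTransGen D.Adj b a) E
  refine ⟨μ, fun x hx => ?_⟩
  obtain ⟨u, w, hux, hwx, huw, hw⟩ := hexit x hx
  by_cases hxE : x ∈ E
  · obtain ⟨w, hw, hxw, hwx⟩ := hxE
    exact ⟨w, hw, hxw, fun h => (hwx h).elim⟩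
  have huE : u ∈ E := ⟨w, hw, huw, fun hwu => hwx ⟨hwu.trans hux.1, hux.2.tail huw⟩⟩
  obtain ⟨y, ⟨hxy, hyx⟩, hμy⟩ :=
    hμ x u (reflTransGen_within_of_reflTransGen hux.2 hux.1) huE hxE
  exact ⟨y, hS x y hx ⟨.single hxy, hyx⟩, hxy, fun _ => hμy⟩

theorem exists_isOutRay_of_forall_exists_exit {x₀ : V} (hx₀ : x₀ ∈ S)
    (hS : ∀ x y, x ∈ S → StrongEquiv D x y → y ∈ S)
    (hexit : ∀ x ∈ S, ∃ u w, StrongEquiv D u x ∧ ¬ StrongEquiv D w x ∧ D.Adj u w ∧ w ∈ S) :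
    ∃ f, IsOutRay D f := by
  obtain ⟨μ, hstep⟩ := exists_step_of_forall_exists_exit D hS hexit
  choose! g hgS hg hgμ using hstep
  have hmem : ∀ n, g^[n] x₀ ∈ S := fun n => by
    induction n with
    | zero => exact hx₀
    | succ n ih => exact Function.iterate_succ_apply' g n x₀ ▸ hgS _ ih
  have hf : ∀ n, D.Adj (g^[n] x₀) (g^[n + 1] x₀) := fun n => by
    rw [Function.iterate_succ_apply']; exact hg _ (hmem n)
  refine ⟨fun n => g^[n] x₀, injective_of_rel_succ_of_measure_lt (μ := μ) hf fun n => ?_, hf⟩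
  rw [Function.iterate_succ_apply']
  exact hgμ _ (hmem n)

end OutRay

section InRay

variable {D : Digraph V}

theorem exists_adj_infinite_of_infinite_reflTransGen
    (hfin : ∀ v : V, {u | StrongEquiv D u v}.Finite) (hdeg : ∀ v : V, {u | D.Adj u v}.Finite)
    {v : V} (hv : {u | ReflTransGen D.Adj u v}.Infinite) :
    ∃ c w, StrongEquiv D c v ∧ ¬ StrongEquiv D w v ∧ D.Adj w c ∧
      {u | ReflTransGen D.Adj u w}.Infinite := by
  let N := {w | ¬ StrongEquiv D w v ∧ ∃ c, StrongEquiv D c v ∧ D.Adj w c}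
  have hN : N.Finite := ((hfin v).biUnion fun c _ => hdeg c).subset
    fun w ⟨_, c, hc, hwc⟩ => Set.mem_biUnion hc hwc
  have hcover : {u | ReflTransGen D.Adj u v} \ {u | StrongEquiv D u v} ⊆
      ⋃ w ∈ N, {u | ReflTransGen D.Adj u w} := by
    rintro z ⟨hzv, hz⟩
    obtain ⟨w, c, hzw, hw, hc, hwc⟩ :=
      exists_rel_of_reflTransGen_of_not (P := fun w => StrongEquiv D w v) hzv hz
        ⟨.refl, .refl⟩
    exact Set.mem_biUnion ⟨hw, c, hc, hwc⟩ hzw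
  by_contra! hfin'
  refine (hv.sdiff (hfin v)) ((hN.biUnion fun w ⟨hw, c, hc, hwc⟩ => ?_).subset hcover)
  exact hfin' c w hc hw hwc

theorem finite_reflTransGen_of_forall_not_isInRay
    (hfin : ∀ v : V, {u | StrongEquiv D u v}.Finite) (hdeg : ∀ v : V, {u | D.Adj u v}.Finite)
    (hray : ∀ f, ¬ IsInRay D f) (v : V) : {u | ReflTransGen D.Adj u v}.Finite := by
  by_contra hv
  have hexit : ∀ x, {u | ReflTransGen D.Adj u x}.Infinite → ∃ c w, StrongEquiv D.reverse c x ∧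
      ¬ StrongEquiv D.reverse w x ∧ D.reverse.Adj c w ∧ {u | ReflTransGen D.Adj u w}.Infinite := by
    intro x hx
    obtain ⟨c, w, hcx, hwx, hwc, hw⟩ := exists_adj_infinite_of_infinite_reflTransGen hfin hdeg hx
    exact ⟨c, w, strongEquiv_reverse.mpr hcx, mt strongEquiv_reverse.mp hwx, hwc, hw⟩
  obtain ⟨f, hf⟩ := exists_isOutRay_of_forall_exists_exit D.reverse
    (S := {v | {u | ReflTransGen D.Adj u v}.Infinite}) hv
    (fun x y hx hxy => hx.mono fun u hu => hu.trans (strongEquiv_reverse.mp hxy).1) hexit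
  exact hray f hf

end InRay

theorem exists_isOutRay_of_finite_reflTransGen [Infinite V] (D : Digraph V)
    (hB : ∀ v : V, {u | ReflTransGen D.Adj u v}.Finite)
    (hout : {v : V | ¬ ∃ u w, StrongEquiv D u v ∧ ¬ StrongEquiv D w v ∧ D.Adj u w}.Finite) :
    ∃ f, IsOutRay D f := by
  obtain ⟨x₀, hx₀⟩ := (hout.biUnion fun v _ => hB v).infinite_compl.nonempty
  refine exists_isOutRay_of_forall_exists_exit D (S := {z | ReflTransGen D.Adj x₀ z}) .refl
    (fun x y hx hxy => hx.trans hxy.1) fun z hz => ?_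
  by_cases hexit : ∃ u w, StrongEquiv D u z ∧ ¬ StrongEquiv D w z ∧ D.Adj u w
  · obtain ⟨u, w, huz, hwz, huw⟩ := hexit
    exact ⟨u, w, huz, hwz, huw, (hz.trans huz.2).tail huw⟩
  · exact (hx₀ (Set.mem_biUnion hexit hz)).elim

/-- Proposition 4.4: an infinite digraph all of whose strong components are finite, such
that all but finitely many strong components have an outgoing edge, contains an in-ray,
an out-ray, or a vertex of infinite in-degree. -/
theorem stmt1 [Infinite V] (D : Digraph V)
    (hfin : ∀ v : V, {u | StrongEquiv D u v}.Finite)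
    (hout : {v : V | ¬ ∃ u w, StrongEquiv D u v ∧ ¬ StrongEquiv D w v ∧ D.Adj u w}.Finite) :
    (∃ f, IsInRay D f) ∨ (∃ f, IsOutRay D f) ∨ ∃ v : V, {u | D.Adj u v}.Infinite := by
  by_contra! h
  obtain ⟨hin, hnoout, hdeg⟩ := h
  obtain ⟨f, hf⟩ := exists_isOutRay_of_finite_reflTransGen D
    (finite_reflTransGen_of_forall_not_isInRay hfin hdeg hin) hout
  exact hnoout f hf
end

section
/- Let D be a digraph and let (R_i)_{i∈I} be a family of pairwise disjoint equivalent out-rays such that for any two indices i, j with an edge i→j in the auxiliary graph D^∞(I) there are infinitely many pairwise disjoint R_i–R_j paths internally disjoint from the union of all rays. Then for every finite vertex set X ⊆ V(D) and every sequence i_1, …, i_n of distinct indices with infinitely many disjoint R_{i_k}–R_{i_{k+1}} paths (internally disjoint from the rays) for each k, there exists a directed path P in D avoiding X which is a concatenation P_1 Q_2 P_2 Q_3 ⋯ Q_{n−1} P_{n−1}, where each P_k is an R_{i_k}–R_{i_{k+1}} path internally disjoint from all rays of the family and each Q_k is a non-trivial subpath of R_{i_k}. -/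
variable {V : Type*}

/-- The internal vertices of a path. -/
def Internals (p : List V) : List V := p.tail.dropLast

def InternallyAvoids (p : List V) (U : Set V) : Prop := ∀ v ∈ Internals p, v ∉ U

/-- Infinitely many pairwise disjoint `A`–`B` paths whose internal vertices avoid `U`. -/
def ManyDisjointPathsAvoiding (D : Digraph V) (A B U : Set V) : Prop :=
  ∃ P : ℕ → List V,
    (∀ n, IsDipath D (P n) ∧ StartsIn (P n) A ∧ EndsIn (P n) B ∧
      InternallyAvoids (P n) U) ∧
    ∀ m n, m ≠ n → ListsDisjoint (P m) (P n)

/-- The union of the vertex sets of a family of rays. -/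
def RaysUnion {I : Type*} (R : I → ℕ → V) : Set V := ⋃ i, Set.range (R i)

/-- A non-trivial finite segment of a ray `R`, from position `s` to position `t`. -/
def IsRaySegment (R : ℕ → V) (q : List V) : Prop :=
  ∃ s t : ℕ, s < t ∧ q = (List.range (t - s + 1)).map fun m => R (s + m)

/-- `L` is a staircase for the sequence of ray-indices `seq`: a concatenation
`P₀ Q₁ P₁ ⋯ Q_{n-1} P_{n-1}` where `P k` is an `R (seq k)`–`R (seq (k+1))` path
internally disjoint from all rays and each `Q k` (for `k ≥ 1`) is a non-trivial
segment of `R (seq k)`. -/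
def IsStaircase {I : Type*} (D : Digraph V) (R : I → ℕ → V) {n : ℕ}
    (seq : Fin (n + 1) → I) (L : List V) : Prop :=
  ∃ P Q : Fin n → List V,
    (∀ k : Fin n, IsDipath D (P k) ∧
      StartsIn (P k) (Set.range (R (seq k.castSucc))) ∧
      EndsIn (P k) (Set.range (R (seq k.succ))) ∧
      InternallyAvoids (P k) (RaysUnion R)) ∧
    (∀ k : Fin n, 1 ≤ k.val → IsRaySegment (R (seq k.castSucc)) (Q k)) ∧
    (∀ k : Fin n, ∀ h : 1 ≤ k.val,
      (P ⟨k.val - 1, by omega⟩).getLast? = (Q k).head? ∧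
      (Q k).getLast? = (P k).head?) ∧
    L = (List.ofFn fun k : Fin n =>
      if k.val = 0 then P k else (Q k).tail ++ (P k).tail).flatten ∧
    IsDipath D L

/-!
The staircase is built one rung at a time, keeping the invariant that the staircase `L` built so
far ends at position `t` of the current ray, beyond which that ray meets neither `L` nor `X`.
Among the infinitely many pairwise disjoint paths from the current ray to the next one, only
finitely many meet the finite set `X ∪ L`, and their start and end positions are injective in the
index, hence tend to infinity. So one of them avoids `X ∪ L`, starts beyond `t`, and ends at a
position `t'` beyond which the next ray avoids `X ∪ L`. Appending the ray segment from `t` to its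
start, and then the path, restores the invariant with `t'` in place of `t`.
-/

open Filter

section Paths

variable {D : Digraph V}

theorem IsDipath.append_tail {L M : List V} (hL : IsDipath D L) (hM : IsDipath D M)
    (hLM : L.getLast? = M.head?) (hdisj : ∀ v ∈ L, v ∉ M.tail) : IsDipath D (L ++ M.tail) := by
  obtain ⟨a, M, rfl⟩ := List.exists_cons_of_ne_nil hM.1
  refine ⟨by simp [hL.1], List.nodup_append.2 ⟨hL.2.1, (List.nodup_cons.1 hM.2.1).2,
    fun v hv w hw hvw => hdisj v hv (hvw ▸ hw)⟩, List.isChain_append.2 ⟨hL.2.2, hM.2.2.tail, ?_⟩⟩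
  rintro x hx y hy
  obtain ⟨M, rfl⟩ : ∃ M', M = y :: M' := ⟨M.tail, (List.cons_head?_tail hy).symm⟩
  rw [hLM, List.head?_cons, Option.mem_some_iff] at hx
  exact hx ▸ (List.isChain_cons_cons.1 hM.2.2).1

theorem InternallyAvoids.getLast?_eq_of_mem_tail {p : List V} {U : Set V} {v : V}
    (hp : InternallyAvoids p U) (hv : v ∈ p.tail) (hvU : v ∈ U) : p.getLast? = some v := by
  obtain _ | ⟨a, l⟩ := p
  · simp at hv
  have hl : l ≠ [] := List.ne_nil_of_mem hv
  rw [List.tail_cons, ← List.dropLast_append_getLast hl, List.mem_append,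
    List.mem_singleton] at hv
  rcases hv with hv | rfl
  · exact absurd hvU (hp v hv)
  · rw [List.getLast?_eq_some_getLast (List.cons_ne_nil a l), List.getLast_cons hl]

theorem ManyDisjointPathsAvoiding.exists_path {A B : ℕ → V} {U F : Set V}
    (h : ManyDisjointPathsAvoiding D (Set.range A) (Set.range B) U) (hF : F.Finite)
    (s₀ t₀ : ℕ) :
    ∃ p s t, IsDipath D p ∧ p.head? = some (A s) ∧ p.getLast? = some (B t) ∧
      InternallyAvoids p U ∧ (∀ v ∈ p, v ∉ F) ∧ s₀ < s ∧ t₀ ≤ t := by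
  obtain ⟨P, hP, hdisj⟩ := h
  have hinj_of_mem : ∀ f : ℕ → V, (∀ n, f n ∈ P n) → Function.Injective f := fun f hf m n hmn =>
    by_contra fun hne => hdisj m n hne _ (hf m) (hmn ▸ hf n)
  have hstart : ∀ n, ∃ s, (P n).head? = some (A s) := fun n => by
    obtain ⟨_, ⟨s, rfl⟩, h⟩ := (hP n).2.1
    exact ⟨s, h⟩
  have hend : ∀ n, ∃ t, (P n).getLast? = some (B t) := fun n => by
    obtain ⟨_, ⟨t, rfl⟩, h⟩ := (hP n).2.2.1
    exact ⟨t, h⟩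
  choose s hs using hstart
  choose t ht using hend
  have hs_tendsto : Tendsto s atTop atTop := by
    rw [← Nat.cofinite_eq_atTop]
    refine (Function.Injective.of_comp (f := A) (hinj_of_mem _ fun n => ?_)).tendsto_cofinite
    exact List.mem_of_mem_head? (hs n)
  have ht_tendsto : Tendsto t atTop atTop := by
    rw [← Nat.cofinite_eq_atTop]
    refine (Function.Injective.of_comp (f := B) (hinj_of_mem _ fun n => ?_)).tendsto_cofinite
    exact List.mem_of_mem_getLast? (ht n)
  have hF_avoid : ∀ᶠ n in atTop, ∀ v ∈ F, v ∉ P n := by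
    rw [← Nat.cofinite_eq_atTop, hF.eventually_all]
    intro v _
    refine Filter.eventually_cofinite.2 (Set.Subsingleton.finite fun m hm n hn => ?_)
    exact by_contra fun hmn => hdisj m n hmn v (not_not.1 hm) (not_not.1 hn)
  obtain ⟨n, hnF, hns, hnt⟩ :=
    (hF_avoid.and ((hs_tendsto.eventually_gt_atTop s₀).and
      (ht_tendsto.eventually_ge_atTop t₀))).exists
  exact ⟨P n, s n, t n, (hP n).1, hs n, ht n, (hP n).2.2.2, fun v hv hvF => hnF v hvF hv,
    hns, hnt⟩

end Paths

section RaySegments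

variable {D : Digraph V} {R : ℕ → V} {s t : ℕ}

def raySegment (R : ℕ → V) (s t : ℕ) : List V := (List.range' s (t - s + 1)).map R

theorem isRaySegment_raySegment (h : s < t) : IsRaySegment R (raySegment R s t) :=
  ⟨s, t, h, by simp [raySegment, List.range'_eq_map_range]⟩

theorem raySegment_head? : (raySegment R s t).head? = some (R s) := by
  simp [raySegment, List.range'_succ]

theorem raySegment_ne_nil : raySegment R s t ≠ [] :=
  List.ne_nil_of_mem (List.mem_of_mem_head? raySegment_head?)

theorem raySegment_getLast? (h : s ≤ t) : (raySegment R s t).getLast? = some (R t) := by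
  simp only [raySegment, List.getLast?_map, List.getLast?_range', Nat.add_one_ne_zero,
    if_false, Option.map_some]
  congr 2
  omega

theorem mem_raySegment_tail {v : V} (hv : v ∈ (raySegment R s t).tail) :
    ∃ r, s < r ∧ R r = v := by
  simp only [raySegment, ← List.map_tail, List.tail_range', List.mem_map, List.mem_range'] at hv
  obtain ⟨_, ⟨i, -, rfl⟩, rfl⟩ := hv
  exact ⟨s + 1 + i, by omega, by rw [one_mul]⟩

theorem IsOutRay.isDipath_raySegment (hR : IsOutRay D R) : IsDipath D (raySegment R s t) := by
  refine ⟨raySegment_ne_nil, (List.nodup_range' _).map hR.1, ?_⟩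
  show List.IsChain D.Adj ((List.range' s _).map R)
  rw [List.isChain_map]
  exact (List.isChain_range' s _ 1).imp fun a b (hab : b = a + 1) => hab ▸ hR.2 a

theorem IsDipath.append_raySegment_tail_append {L p : List V} (hL : IsDipath D L)
    (hLt : L.getLast? = some (R t)) (hLR : ∀ r, t < r → R r ∉ L) (hR : IsOutRay D R)
    (hp : IsDipath D p) (hps : p.head? = some (R s)) (hpR : ∀ v ∈ p.tail, v ∉ Set.range R)
    (hpL : ∀ v ∈ p, v ∉ L) (hts : t < s) :
    IsDipath D (L ++ ((raySegment R t s).tail ++ p.tail)) := by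
  have hq : IsDipath D (raySegment R t s ++ p.tail) :=
    hR.isDipath_raySegment.append_tail hp (by rw [raySegment_getLast? hts.le, hps])
      fun v hv hvp => hpR v hvp ((List.mem_map.1 hv).imp fun _ => And.right)
  rw [← List.tail_append_of_ne_nil raySegment_ne_nil]
  refine hL.append_tail hq (by rw [hLt, List.head?_append, raySegment_head?]; rfl) ?_
  intro v hvL hv
  rw [List.tail_append_of_ne_nil raySegment_ne_nil, List.mem_append] at hv
  rcases hv with hv | hv
  · obtain ⟨r, hr, rfl⟩ := mem_raySegment_tail hv
    exact hLR r hr hvL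
  · exact hpL v (List.mem_of_mem_tail hv) hvL

end RaySegments

section Staircases

variable {I : Type*} {D : Digraph V} {R : I → ℕ → V}

def IsStaircaseWith (D : Digraph V) (R : I → ℕ → V) {n : ℕ} (seq : Fin (n + 1) → I)
    (P Q : Fin n → List V) (L : List V) : Prop :=
  (∀ k : Fin n, IsDipath D (P k) ∧
    StartsIn (P k) (Set.range (R (seq k.castSucc))) ∧
    EndsIn (P k) (Set.range (R (seq k.succ))) ∧
    InternallyAvoids (P k) (RaysUnion R)) ∧
  (∀ k : Fin n, 1 ≤ k.val → IsRaySegment (R (seq k.castSucc)) (Q k)) ∧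
  (∀ k : Fin n, ∀ h : 1 ≤ k.val,
    (P ⟨k.val - 1, by omega⟩).getLast? = (Q k).head? ∧
    (Q k).getLast? = (P k).head?) ∧
  L = (List.ofFn fun k : Fin n =>
    if k.val = 0 then P k else (Q k).tail ++ (P k).tail).flatten ∧
  IsDipath D L

theorem IsStaircaseWith.isStaircase {n : ℕ} {seq : Fin (n + 1) → I} {P Q : Fin n → List V}
    {L : List V} (h : IsStaircaseWith D R seq P Q L) : IsStaircase D R seq L :=
  ⟨P, Q, h⟩

theorem isStaircaseWith_single {seq : Fin 2 → I} {p : List V} (hp : IsDipath D p)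
    (hps : StartsIn p (Set.range (R (seq 0)))) (hpt : EndsIn p (Set.range (R (seq 1))))
    (hpU : InternallyAvoids p (RaysUnion R)) :
    IsStaircaseWith D R seq (fun _ => p) (fun _ => []) p := by
  refine ⟨fun k => by rw [Fin.fin_one_eq_zero k]; exact ⟨hp, hps, hpt, hpU⟩,
    fun k hk => ?_, fun k hk => ?_, by simp, hp⟩ <;> omega

theorem IsStaircaseWith.snoc {n : ℕ} {seq : Fin (n + 3) → I} {P Q : Fin (n + 1) → List V}
    {L p : List V} {s t t' : ℕ} (hL : IsStaircaseWith D R (Fin.init seq) P Q L)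
    (hPt : (P (Fin.last n)).getLast? = some (R (seq (Fin.last (n + 1)).castSucc) t))
    (hLt : L.getLast? = some (R (seq (Fin.last (n + 1)).castSucc) t))
    (hLR : ∀ r, t < r → R (seq (Fin.last (n + 1)).castSucc) r ∉ L)
    (hR : IsOutRay D (R (seq (Fin.last (n + 1)).castSucc)))
    (hp : IsDipath D p) (hps : p.head? = some (R (seq (Fin.last (n + 1)).castSucc) s))
    (hpt : p.getLast? = some (R (seq (Fin.last (n + 2))) t'))
    (hpU : InternallyAvoids p (RaysUnion R))
    (hpR : ∀ v ∈ p.tail, v ∉ Set.range (R (seq (Fin.last (n + 1)).castSucc)))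
    (hpL : ∀ v ∈ p, v ∉ L) (hts : t < s) :
    IsStaircaseWith D R seq (Fin.snoc P p)
      (Fin.snoc Q (raySegment (R (seq (Fin.last (n + 1)).castSucc)) t s))
      (L ++ ((raySegment (R (seq (Fin.last (n + 1)).castSucc)) t s).tail ++ p.tail)) := by
  obtain ⟨hP, hQ, hPQ, rfl, hLd⟩ := hL
  refine ⟨fun k => ?_, fun k hk => ?_, fun k hk => ?_, ?_,
    hLd.append_raySegment_tail_append hLt hLR hR hp hps hpR hpL hts⟩
  · refine Fin.lastCases ?_ (fun j => ?_) k
    · simp only [Fin.snoc_last]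
      exact ⟨hp, ⟨_, ⟨s, rfl⟩, hps⟩, ⟨_, ⟨t', rfl⟩, hpt⟩, hpU⟩
    · simp only [Fin.snoc_castSucc]
      exact hP j
  · refine Fin.lastCases (fun _ => ?_) (fun j hj => ?_) k hk
    · simp only [Fin.snoc_last]
      exact isRaySegment_raySegment hts
    · simp only [Fin.snoc_castSucc]
      exact hQ j hj
  · revert hk
    refine Fin.lastCases (fun _ => ?_) (fun j hj => ?_) k
    · refine ⟨?_, by rw [Fin.snoc_last, Fin.snoc_last, raySegment_getLast? hts.le, hps]⟩
      rw [Fin.snoc_last, raySegment_head?, ← hPt]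
      exact congrArg List.getLast? (Fin.snoc_castSucc (α := fun _ => List V) p P (Fin.last n))
    · simpa [Fin.snoc, Fin.is_le] using hPQ j hj
  · rw [List.ofFn_succ' (n := n + 1), List.concat_eq_append, List.flatten_concat]
    congr 1
    · congr 2
      funext i
      simp only [Fin.snoc_castSucc, Fin.val_castSucc]
    · simp [Fin.snoc_last]

theorem exists_path_between_rays (hray : ∀ i, IsOutRay D (R i))
    (hdisj : ∀ i j, i ≠ j → ∀ n m, R i n ≠ R j m) {i j : I} (hij : i ≠ j)
    (h : ManyDisjointPathsAvoiding D (Set.range (R i)) (Set.range (R j)) (RaysUnion R))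
    {F : Set V} (hF : F.Finite) (s₀ : ℕ) :
    ∃ p s t, IsDipath D p ∧ p.head? = some (R i s) ∧ p.getLast? = some (R j t) ∧
      p.tail.getLast? = some (R j t) ∧ InternallyAvoids p (RaysUnion R) ∧
      (∀ v ∈ p, v ∉ F) ∧ s₀ < s ∧ (∀ v ∈ p.tail, v ∉ Set.range (R i)) ∧
      ∀ r, t < r → R j r ∉ F ∧ R j r ∉ p := by
  obtain ⟨t₀, ht₀⟩ := (show ∀ᶠ r in atTop, R j r ∉ F by
    rw [← Nat.cofinite_eq_atTop]
    exact (hray j).1.tendsto_cofinite.eventually hF.eventually_cofinite_notMem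
    ).exists_forall_of_atTop
  obtain ⟨p, s, t, hp, hps, hpt, hpU, hpF, hs, ht⟩ := h.exists_path hF s₀ t₀
  have hrays : ∀ k r, R k r ∈ RaysUnion R := fun k r => Set.mem_iUnion.2 ⟨k, r, rfl⟩
  have htail : ∀ v ∈ p.tail, ∀ k r, v = R k r → v = R j t := fun v hv k r hvr =>
    Option.some_inj.1 ((hpU.getLast?_eq_of_mem_tail hv (hvr ▸ hrays k r)).symm.trans hpt)
  obtain ⟨a, p, rfl⟩ := List.exists_cons_of_ne_nil hp.1
  rw [List.head?_cons, Option.some_inj] at hps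
  subst hps
  refine ⟨_, s, t, hp, rfl, hpt, ?_, hpU, hpF, hs, ?_, fun r hr => ⟨ht₀ r (by omega), ?_⟩⟩
  · obtain _ | ⟨b, p⟩ := p
    · exact absurd (Option.some_inj.1 hpt) (hdisj i j hij s t)
    · simpa only [List.tail_cons, List.getLast?_cons_cons] using hpt
  · rintro v hv ⟨r, rfl⟩
    exact hdisj i j hij r t (htail _ hv i r rfl)
  · intro hr'
    rcases List.mem_cons.1 hr' with hr' | hr'
    · exact hdisj i j hij s r hr'.symm
    · have := (hray j).1 (htail _ hr' j r rfl)
      omega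

theorem exists_staircaseWith_avoiding (hray : ∀ i, IsOutRay D (R i))
    (hdisj : ∀ i j, i ≠ j → ∀ n m, R i n ≠ R j m) {X : Set V} (hX : X.Finite) :
    ∀ (n : ℕ) (seq : Fin (n + 2) → I), (∀ k : Fin (n + 1), seq k.castSucc ≠ seq k.succ) →
      (∀ k : Fin (n + 1), ManyDisjointPathsAvoiding D
        (Set.range (R (seq k.castSucc))) (Set.range (R (seq k.succ))) (RaysUnion R)) →
      ∃ P Q L t, IsStaircaseWith D R seq P Q L ∧ (∀ v ∈ L, v ∉ X) ∧
        (P (Fin.last n)).getLast? = some (R (seq (Fin.last (n + 1))) t) ∧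
        L.getLast? = some (R (seq (Fin.last (n + 1))) t) ∧
        ∀ r, t < r → R (seq (Fin.last (n + 1))) r ∉ L ∧ R (seq (Fin.last (n + 1))) r ∉ X
  | 0, seq, hne, hedge => by
    obtain ⟨p, s, t, hp, hps, hpt, -, hpU, hpX, -, -, htX⟩ :=
      exists_path_between_rays hray hdisj (hne 0) (hedge 0) hX 0
    exact ⟨fun _ => p, fun _ => [], p, t,
      isStaircaseWith_single hp ⟨_, ⟨s, rfl⟩, hps⟩ ⟨_, ⟨t, rfl⟩, hpt⟩ hpU, hpX, hpt, hpt,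
      fun r hr => (htX r hr).symm⟩
  | n + 1, seq, hne, hedge => by
    obtain ⟨P, Q, L, t, hL, hLX, hPt, hLt, hLR⟩ :=
      exists_staircaseWith_avoiding hray hdisj hX n (Fin.init seq)
        (fun k => hne k.castSucc) (fun k => hedge k.castSucc)
    obtain ⟨p, s, t', hp, hps, hpt, hpt', hpU, hpF, hts, hpR, hpR'⟩ :=
      exists_path_between_rays hray hdisj (hne (Fin.last _)) (hedge (Fin.last _))
        (hX.union L.finite_toSet) t
    refine ⟨_, _, _, t', hL.snoc hPt hLt (fun r hr => (hLR r hr).1) (hray _) hp hps hpt hpU hpR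
      (fun v hv hvL => hpF v hv (Or.inr hvL)) hts, ?_, by rwa [Fin.snoc_last], ?_, ?_⟩
    · simp only [List.mem_append]
      rintro v (hv | hv | hv)
      · exact hLX v hv
      · obtain ⟨r, hr, rfl⟩ := mem_raySegment_tail hv
        exact (hLR r hr).2
      · exact fun hvX => hpF v (List.mem_of_mem_tail hv) (Or.inl hvX)
    · simp [List.getLast?_append, hpt']
    · intro r hr
      obtain ⟨hrF, hrp⟩ := hpR' r hr
      refine ⟨?_, fun hrX => hrF (Or.inl hrX)⟩
      simp only [List.mem_append]
      rintro (hrL | hrq | hrp')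
      · exact hrF (Or.inr hrL)
      · obtain ⟨r', -, hr'⟩ := mem_raySegment_tail hrq
        exact hdisj _ _ (hne (Fin.last _)) r' r hr'
      · exact hrp (List.mem_of_mem_tail hrp')

end Staircases

theorem stmt6_general {I : Type*} (D : Digraph V) (R : I → ℕ → V)
    (hray : ∀ i, IsOutRay D (R i))
    (hdisj : ∀ i j, i ≠ j → ∀ n m, R i n ≠ R j m)
    (X : Set V) (hX : X.Finite)
    (n : ℕ) (hn : 1 ≤ n) (seq : Fin (n + 1) → I) (hinj : Function.Injective seq)
    (hedge : ∀ k : Fin n, ManyDisjointPathsAvoiding D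
      (Set.range (R (seq k.castSucc))) (Set.range (R (seq k.succ))) (RaysUnion R)) :
    ∃ L : List V, IsStaircase D R seq L ∧ ∀ v ∈ L, v ∉ X := by
  obtain ⟨m, rfl⟩ := Nat.exists_eq_add_of_le' hn
  have hne : ∀ k : Fin (m + 1), seq k.castSucc ≠ seq k.succ := fun k h =>
    (Fin.castSucc_lt_succ (i := k)).ne (hinj h)
  obtain ⟨_, _, L, -, hL, hLX, -⟩ := exists_staircaseWith_avoiding hray hdisj hX m seq hne hedge
  exact ⟨L, hL.isStaircase, hLX⟩

/-- Proposition 2.3: staircases avoiding any finite vertex set exist along any sequence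
of distinct indices consecutive in `D^∞(I)`. -/
theorem stmt6 {I : Type*} (D : Digraph V) (R : I → ℕ → V)
    (hray : ∀ i, IsOutRay D (R i))
    (hdisj : ∀ i j, i ≠ j → ∀ n m, R i n ≠ R j m)
    (hequiv : ∀ i j, i ≠ j → EquivRays D (R i) (R j))
    (X : Set V) (hX : X.Finite)
    (n : ℕ) (hn : 1 ≤ n) (seq : Fin (n + 1) → I) (hinj : Function.Injective seq)
    (hedge : ∀ k : Fin n, ManyDisjointPathsAvoiding D
      (Set.range (R (seq k.castSucc))) (Set.range (R (seq k.succ))) (RaysUnion R)) :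
    ∃ L : List V, IsStaircase D R seq L ∧ ∀ v ∈ L, v ∉ X :=
  stmt6_general D R hray hdisj X hX n hn seq hinj hedge
end

section
/- Let N be a necklace in a digraph D, witnessed by a family (H_n)_{n∈ℕ} of finite strongly connected subgraphs with N = ⋃_n H_n and H_i ∩ H_j ≠ ∅ iff |i − j| ≤ 1. Then for every finite set X ⊆ V(N), the digraph N − X has exactly one infinite strong component, and this component contains all but finitely many vertices of N. -/
variable {V : Type*}

/-- Reachability by a directed path all of whose vertices lie in `s`. -/
def ReachOn (D : Digraph V) (s : Set V) : V → V → Prop :=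
  Relation.ReflTransGen (fun a b => a ∈ s ∧ b ∈ s ∧ D.Adj a b)

/-- A vertex set is strongly connected (within itself). -/
def StrongOn (D : Digraph V) (s : Set V) : Prop :=
  ∀ u ∈ s, ∀ v ∈ s, ReachOn D s u v

/-- `H` witnesses that `N` is a necklace: `N` is the union of finite nonempty strongly
connected pieces `H n`, consecutive pieces meet, and non-consecutive pieces are
disjoint. -/
def IsNecklaceWitness (D : Digraph V) (N : Set V) (H : ℕ → Set V) : Prop :=
  (∀ n, (H n).Finite ∧ (H n).Nonempty ∧ StrongOn D (H n)) ∧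
  N = ⋃ n, H n ∧
  ∀ i j : ℕ, (H i ∩ H j).Nonempty ↔ (i ≤ j + 1 ∧ j ≤ i + 1)

/-- `C` is a strong component of the subdigraph of `D` induced on `s`. -/
def IsStrongComponentOn (D : Digraph V) (s : Set V) (C : Set V) : Prop :=
  ∃ v ∈ s, C = {u | u ∈ s ∧ ReachOn D s u v ∧ ReachOn D s v u}

lemma ReachOn.mono {D : Digraph V} {s t : Set V} (hst : s ⊆ t) {u v : V}
    (h : ReachOn D s u v) : ReachOn D t u v := by
  induction h with
  | refl => exact Relation.ReflTransGen.refl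
  | tail _ h ih => exact ih.tail ⟨hst h.1, hst h.2.1, h.2.2⟩

lemma ReachOn.trans {D : Digraph V} {s : Set V} {u v w : V}
    (h : ReachOn D s u v) (h' : ReachOn D s v w) : ReachOn D s u w :=
  Relation.ReflTransGen.trans h h'

/-- For a necklace `N` and a finite `X ⊆ N`, the digraph `N − X` has exactly one
infinite strong component, and this component contains all but finitely many vertices
of `N`. -/
theorem stmt8 (D : Digraph V) (N : Set V) (H : ℕ → Set V)
    (hN : IsNecklaceWitness D N H) (X : Set V) (hX : X.Finite) (hXN : X ⊆ N) :
    ∃ C : Set V, IsStrongComponentOn D (N \ X) C ∧ C.Infinite ∧ (N \ C).Finite ∧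
      ∀ C', IsStrongComponentOn D (N \ X) C' → C'.Infinite → C' = C := by
  obtain ⟨hfin, hUnion, hmeet⟩ := hN
  have hHN : ∀ n, H n ⊆ N := fun n => hUnion ▸ Set.subset_iUnion H n
  -- choose an index for each element of X
  have hsel : ∀ x : V, ∃ n, x ∈ X → x ∈ H n := by
    intro x
    by_cases hx : x ∈ X
    · have : x ∈ ⋃ n, H n := hUnion ▸ hXN hx
      obtain ⟨n, hn⟩ := Set.mem_iUnion.mp this
      exact ⟨n, fun _ => hn⟩
    · exact ⟨0, fun h => absurd h hx⟩
  choose g hg using hsel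
  obtain ⟨M₀, hM₀⟩ := (hX.image g).bddAbove
  set M : ℕ := M₀ + 2 with hM
  -- for n ≥ M, H n avoids X
  have hHX : ∀ n, M ≤ n → H n ∩ X = ∅ := by
    intro n hn
    by_contra h
    obtain ⟨x, hx1, hx2⟩ := Set.nonempty_iff_ne_empty.mpr h
    have hx3 : x ∈ H (g x) := hg x hx2
    have : n ≤ g x + 1 := ((hmeet n (g x)).mp ⟨x, hx1, hx3⟩).1
    have : g x ≤ M₀ := hM₀ (Set.mem_image_of_mem g hx2)
    omega
  have hsub : ∀ n, M ≤ n → H n ⊆ N \ X := by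
    intro n hn x hx
    refine ⟨hHN n hx, fun hxX => ?_⟩
    have := hHX n hn
    exact absurd (Set.mem_inter hx hxX) (by simp [this])
  -- pick base vertex
  obtain ⟨v₀, hv₀⟩ := (hfin M).2.1
  have hv₀s : v₀ ∈ N \ X := hsub M le_rfl hv₀
  -- reach between H M and H (M+k)
  have hops : ∀ k, ∀ v ∈ H (M + k), ReachOn D (N \ X) v₀ v ∧ ReachOn D (N \ X) v v₀ := by
    intro k
    induction k with
    | zero =>
      intro v hv
      constructor
      · exact ((hfin M).2.2 v₀ hv₀ v hv).mono (hsub M le_rfl)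
      · exact ((hfin M).2.2 v hv v₀ hv₀).mono (hsub M le_rfl)
    | succ k ih =>
      intro v hv
      have hw : (H (M + k) ∩ H (M + k + 1)).Nonempty := (hmeet _ _).mpr (by omega)
      obtain ⟨w, hw1, hw2⟩ := hw
      have hsub' := hsub (M + k + 1) (by omega)
      constructor
      · exact ((ih w hw1).1).trans (((hfin _).2.2 w hw2 v hv).mono hsub')
      · exact (((hfin _).2.2 v hv w hw2).mono hsub').trans (ih w hw1).2
  have hreach : ∀ n, M ≤ n → ∀ v ∈ H n, ReachOn D (N \ X) v₀ v ∧ ReachOn D (N \ X) v v₀ := by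
    intro n hn v hv
    obtain ⟨k, rfl⟩ := Nat.exists_eq_add_of_le hn
    exact hops k v hv
  set C : Set V := {u | u ∈ N \ X ∧ ReachOn D (N \ X) u v₀ ∧ ReachOn D (N \ X) v₀ u} with hC
  have hHC : ∀ n, M ≤ n → H n ⊆ C := by
    intro n hn x hx
    exact ⟨hsub n hn hx, (hreach n hn x hx).2, (hreach n hn x hx).1⟩
  refine ⟨C, ⟨v₀, hv₀s, rfl⟩, ?_, ?_, ?_⟩
  · -- infinite
    have hinj : ∀ f : ℕ → V, (∀ n, f n ∈ H (M + 2 * n)) → Function.Injective f := by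
      intro f hf a b hab
      by_contra hne
      have : (H (M + 2 * a) ∩ H (M + 2 * b)).Nonempty :=
        ⟨f a, hf a, hab ▸ hf b⟩
      have := (hmeet _ _).mp this
      omega
    have hf : ∀ n : ℕ, ∃ x, x ∈ H (M + 2 * n) := fun n => (hfin _).2.1
    choose f hf using hf
    exact Set.infinite_of_injective_forall_mem (hinj f hf)
      (fun n => hHC _ (by omega) (hf n))
  · -- N \ C finite
    have : N \ C ⊆ ⋃ n ∈ Set.Iio M, H n := by
      intro x ⟨hxN, hxC⟩
      have : x ∈ ⋃ n, H n := hUnion ▸ hxN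
      obtain ⟨n, hn⟩ := Set.mem_iUnion.mp this
      rcases lt_or_ge n M with h | h
      · exact Set.mem_biUnion h hn
      · exact absurd (hHC n h hn) hxC
    exact ((Set.finite_Iio M).biUnion (fun n _ => (hfin n).1)).subset this
  · -- uniqueness
    rintro C' ⟨v', hv's, hCeq⟩ hinf
    subst hCeq
    have : ¬ {u | u ∈ N \ X ∧ ReachOn D (N \ X) u v' ∧ ReachOn D (N \ X) v' u} ⊆ ⋃ n ∈ Set.Iio M, H n := by
      intro h
      exact hinf (((Set.finite_Iio M).biUnion (fun n _ => (hfin n).1)).subset h)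
    obtain ⟨u, huC', huB⟩ := Set.not_subset.mp this
    obtain ⟨huS, huv', hv'u⟩ := huC'
    have : u ∈ ⋃ n, H n := hUnion ▸ huS.1
    obtain ⟨n, hn⟩ := Set.mem_iUnion.mp this
    have hnM : M ≤ n := by
      rcases lt_or_ge n M with h | h
      · exact absurd (Set.mem_biUnion (Set.mem_Iio.mpr h) hn) huB
      · exact h
    obtain ⟨huS', huv₀, hv₀u⟩ := hHC n hnM hn
    ext w
    constructor
    · rintro ⟨hwS, hwv', hv'w⟩
      exact ⟨hwS, (hwv'.trans hv'u).trans huv₀, hv₀u.trans (huv'.trans hv'w)⟩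
    · rintro ⟨hwS, hwv₀, hv₀w⟩
      exact ⟨hwS, (hwv₀.trans hv₀u).trans huv', (hv'u.trans huv₀).trans hv₀w⟩
end
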